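/- arXiv:2007.05907 — 2 statements merged into one kernel-verified Lean document; each statement's English description precedes it below -/
import Mathlib

section
/- Given a target state (x, y, v_x, v_y) with y > 0 and two distinct sensor positions l_i ≠ l_j on the x-axis, the full state (x, y, v_x, v_y) with y > 0 is uniquely determined by the two range-Doppler pairs (r_i, d_i) and (r_j, d_j). -/
/-!
The squared range `(x - l)^2 + y^2` is affine in the sensor position `l` up to the common
term `l^2`, so equal ranges at two distinct sensors pin down `x`, and then `y` up to sign,
which `y > 0` fixes. At the now common position the range-rate is the linear form
`(x - l) v_x + y v_y` divided by the same nonzero range; two distinct sensors give two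
independent such forms (determinant `y (l_j - l_i)`), which determine `(v_x, v_y)`.
-/

lemma sqrt_sq_add_sq_inj {a b a' b' : ℝ} :
    Real.sqrt (a^2 + b^2) = Real.sqrt (a'^2 + b'^2) ↔ a^2 + b^2 = a'^2 + b'^2 :=
  Real.sqrt_inj (by positivity) (by positivity)

lemma eq_and_sq_eq_of_sq_dist_eq {li lj x y x' y' : ℝ} (hij : li ≠ lj)
    (hi : (x - li)^2 + y^2 = (x' - li)^2 + y'^2)
    (hj : (x - lj)^2 + y^2 = (x' - lj)^2 + y'^2) :
    x = x' ∧ y^2 = y'^2 := by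
  have hx : x = x' := by
    have h : (lj - li) * (2 * (x - x')) = 0 := by linear_combination hi - hj
    have := (mul_eq_zero.1 h).resolve_left (sub_ne_zero.2 hij.symm)
    linarith
  subst hx
  exact ⟨rfl, by linarith⟩

lemma eq_zero_of_sub_mul_add_mul_eq_zero {li lj x y u w : ℝ} (hij : li ≠ lj) (hy : y ≠ 0)
    (hi : (x - li) * u + y * w = 0) (hj : (x - lj) * u + y * w = 0) :
    u = 0 ∧ w = 0 := by
  have hu : u = 0 := by
    have h : (lj - li) * u = 0 := by linear_combination hi - hj
    exact (mul_eq_zero.1 h).resolve_left (sub_ne_zero.2 hij.symm)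
  subst hu
  exact ⟨rfl, by simpa [hy] using hi⟩

theorem stmt_9 (li lj : ℝ) (hij : li ≠ lj)
    (x y vx vy x' y' vx' vy' : ℝ) (hy : 0 < y) (hy' : 0 < y')
    (hri : Real.sqrt ((x - li)^2 + y^2) = Real.sqrt ((x' - li)^2 + y'^2))
    (hrj : Real.sqrt ((x - lj)^2 + y^2) = Real.sqrt ((x' - lj)^2 + y'^2))
    (hdi : ((x - li)*vx + y*vy)/Real.sqrt ((x - li)^2 + y^2)
         = ((x' - li)*vx' + y'*vy')/Real.sqrt ((x' - li)^2 + y'^2))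
    (hdj : ((x - lj)*vx + y*vy)/Real.sqrt ((x - lj)^2 + y^2)
         = ((x' - lj)*vx' + y'*vy')/Real.sqrt ((x' - lj)^2 + y'^2)) :
    x = x' ∧ y = y' ∧ vx = vx' ∧ vy = vy' := by
  obtain ⟨rfl, hyy⟩ :=
    eq_and_sq_eq_of_sq_dist_eq hij (sqrt_sq_add_sq_inj.1 hri) (sqrt_sq_add_sq_inj.1 hrj)
  obtain rfl : y = y' := (sq_eq_sq₀ hy.le hy'.le).1 hyy
  have range_ne_zero (l : ℝ) : Real.sqrt ((x - l)^2 + y^2) ≠ 0 := by positivity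
  rw [div_left_inj' (range_ne_zero li)] at hdi
  rw [div_left_inj' (range_ne_zero lj)] at hdj
  obtain ⟨hvx, hvy⟩ := eq_zero_of_sub_mul_add_mul_eq_zero (x := x) (u := vx - vx')
    (w := vy - vy') hij hy.ne' (by linear_combination hdi) (by linear_combination hdj)
  exact ⟨rfl, rfl, sub_eq_zero.1 hvx, sub_eq_zero.1 hvy⟩
end

section
/- Let u = -H(HᵀH)⁻¹e₁ with H = [l, 1] ∈ ℝ^{n×2} full column rank and e₁ = (1,0)ᵀ. If q₂ ∈ ℝⁿ has entries (q₂)_i = r_i² where r_i² = (x - l_i)² + y², then uᵀ(q₂ - l∘l)/2 = x, where l∘l denotes the entrywise square of l. -/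
/-!
Writing `G = HᵀH`, the vector `u = -H G⁻¹ e₁` satisfies `uᵀH = -e₁ᵀ G⁻¹ G = -e₁ᵀ`, i.e.
`∑ uᵢ lᵢ = -1` and `∑ uᵢ = 0`. Since `rᵢ² - lᵢ² = -2x lᵢ + (x² + y²)` is affine in `lᵢ`,
pairing it with `u` returns `2x`.
-/

open Matrix

namespace Matrix

theorem isUnit_of_rank_eq_card {n K : Type*} [Fintype n] [DecidableEq n] [Field K]
    {A : Matrix n n K} (h : A.rank = Fintype.card n) : IsUnit A := by
  rw [← mulVec_surjective_iff_isUnit]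
  change Function.Surjective A.mulVecLin
  rw [← LinearMap.range_eq_top]
  apply Submodule.eq_top_of_finrank_eq
  rw [← rank, h, Module.finrank_fintype_fun_eq_card]

theorem vecMul_mul_inv_mulVec {m n R : Type*} [Fintype m] [Fintype n] [DecidableEq n]
    [CommRing R] {H : Matrix m n R} (hH : IsUnit (Hᵀ * H).det) (v : n → R) :
    ((H * (Hᵀ * H)⁻¹) *ᵥ v) ᵥ* H = v := by
  rw [← mulVec_transpose, mulVec_mulVec, ← Matrix.mul_assoc, mul_nonsing_inv _ hH, one_mulVec]

end Matrix

theorem sum_mul_affine_eq {ι : Type*} [Fintype ι] {u l : ι → ℝ}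
    (hl : ∑ i, u i * l i = -1) (h1 : ∑ i, u i = 0) (a b : ℝ) :
    ∑ i, u i * (a * l i + b) = -a := by
  simp only [mul_add, Finset.sum_add_distrib, ← Finset.sum_mul, mul_left_comm _ a,
    ← Finset.mul_sum, hl, h1]
  ring

theorem stmt_17_general {n : ℕ} (l : Fin n → ℝ)
    (H : Matrix (Fin n) (Fin 2) ℝ) (hH : ∀ i, H i 0 = l i ∧ H i 1 = 1)
    (hrank : H.rank = 2)
    (u : Fin n → ℝ) (hu : u = -(H * (Hᵀ * H)⁻¹).mulVec ![1, 0])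
    (x y : ℝ) (r : Fin n → ℝ) (hr : ∀ i, (r i)^2 = (x - l i)^2 + y^2)
    (q₂ : Fin n → ℝ) (hq₂ : ∀ i, q₂ i = (r i)^2) :
    (∑ i, u i * (q₂ i - l i * l i)) / 2 = x := by
  have hG : IsUnit (Hᵀ * H).det := by
    rw [← isUnit_iff_isUnit_det]
    exact isUnit_of_rank_eq_card (by rw [rank_transpose_mul_self, hrank, Fintype.card_fin])
  have huH : u ᵥ* H = -![1, 0] := by rw [hu, neg_vecMul, vecMul_mul_inv_mulVec hG]
  have hul : ∑ i, u i * l i = -1 := by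
    simpa [vecMul, dotProduct, (hH _).1] using congrFun huH 0
  have hu1 : ∑ i, u i = 0 := by
    simpa [vecMul, dotProduct, (hH _).2] using congrFun huH 1
  have hq : ∀ i, q₂ i - l i * l i = -2 * x * l i + (x ^ 2 + y ^ 2) := fun i => by
    rw [hq₂, hr]; ring
  simp only [hq, sum_mul_affine_eq hul hu1]
  ring

theorem stmt_17 {n : ℕ} (hn : 2 ≤ n) (l : Fin n → ℝ) (hl : ∃ i j, l i ≠ l j)
    (H : Matrix (Fin n) (Fin 2) ℝ) (hH : ∀ i, H i 0 = l i ∧ H i 1 = 1)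
    (hrank : H.rank = 2)
    (u : Fin n → ℝ) (hu : u = -(H * (Hᵀ * H)⁻¹).mulVec ![1, 0])
    (x y : ℝ) (r : Fin n → ℝ) (hr : ∀ i, (r i)^2 = (x - l i)^2 + y^2)
    (q₂ : Fin n → ℝ) (hq₂ : ∀ i, q₂ i = (r i)^2) :
    (∑ i, u i * (q₂ i - l i * l i)) / 2 = x :=
  stmt_17_general l H hH hrank u hu x y r hr q₂ hq₂
end
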